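/- arXiv:1911.00179 — 3 statements merged into one kernel-verified Lean document; each statement's English description precedes it below -/
import Mathlib

section
/- The matrix P = K + ((N + 1ᵀK1)/N²)·11ᵀ − (1/N)·K11ᵀ − (1/N)·11ᵀK with K = (T + Tᵀ)/2 is the orthogonal projection (in Frobenius norm) of T onto the set C₁ = { M ∈ ℝ^{N×N} : M = Mᵀ, M·1 = 1 }; i.e., ‖P − T‖_F ≤ ‖M − T‖_F for all M ∈ C₁. -/
open Matrix BigOperators

/-- Frobenius norm of a real matrix. -/
noncomputable def frobNorm {N : ℕ} (M : Matrix (Fin N) (Fin N) ℝ) : ℝ :=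
  Real.sqrt (∑ i, ∑ j, (M i j) ^ 2)

/-!
`C₁` is the affine subspace of symmetric matrices with row sums `1`; its direction consists of the
symmetric matrices `D` with `D *ᵥ 1 = 0`. With `r = K *ᵥ 1` and `c = (N + ∑ r) / N²`,
`P i j = K i j + c - r i / N - r j / N`, so `P ∈ C₁`, and `P - T` is the antisymmetric matrix
`K - T` plus a matrix of the form `u i + u j`. Both kinds of matrices are Frobenius-orthogonal to
every such `D`, so for `M ∈ C₁` Pythagoras gives `‖M - T‖² = ‖M - P‖² + ‖P - T‖²`.
-/

namespace Matrix

variable {m n : Type*}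

theorem mul_of_one_apply [Fintype n] (A : Matrix m n ℝ) (i : m) (j : n) :
    (A * of fun (_ : n) (_ : n) => (1 : ℝ)) i j = (A *ᵥ fun _ => 1) i := by
  simp [mul_apply, mulVec, dotProduct]

theorem of_one_mul_apply [Fintype m] (A : Matrix m n ℝ) (i : m) (j : n) :
    ((of fun (_ : m) (_ : m) => (1 : ℝ)) * A) i j = ((fun _ => 1) ᵥ* A) j := by
  simp [mul_apply, vecMul, dotProduct]

theorem mulVec_one_eq_one_of_apply_eq [Fintype n] [Nonempty n] {K P : Matrix n n ℝ}
    (hP : ∀ i j, P i j = K i j + ((Fintype.card n : ℝ) + ∑ i, ∑ j, K i j) / (Fintype.card n) ^ 2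
      - (K *ᵥ fun _ => 1) i / Fintype.card n - (K *ᵥ fun _ => 1) j / Fintype.card n) :
    P *ᵥ (fun _ => 1) = fun _ => 1 := by
  have hcard : (Fintype.card n : ℝ) ≠ 0 := by positivity
  have hrow : ∀ i, ∑ j, K i j = (K *ᵥ fun _ => 1) i := by simp [mulVec, dotProduct]
  funext i
  rw [mulVec, dotProduct]
  simp only [mul_one, hP, Finset.sum_sub_distrib, Finset.sum_add_distrib, Finset.sum_const,
    Finset.card_univ, nsmul_eq_mul, ← Finset.sum_div, hrow]
  field_simp
  ring

theorem sum_sum_mul_eq_zero_of_transpose_eq_of_transpose_eq_neg [Fintype n]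
    {D S : Matrix n n ℝ} (hD : Dᵀ = D) (hS : Sᵀ = -S) : ∑ i, ∑ j, D i j * S i j = 0 := by
  have hswap : ∑ i, ∑ j, D i j * S i j = -∑ i, ∑ j, D i j * S i j := by
    conv_lhs => rw [Finset.sum_comm]
    simp only [← Finset.sum_neg_distrib]
    refine Finset.sum_congr rfl fun i _ => Finset.sum_congr rfl fun j _ => ?_
    rw [← transpose_apply D, hD, ← transpose_apply S, hS, neg_apply, mul_neg]
  linarith

theorem sum_sum_mul_add_eq_zero [Fintype m] [Fintype n] {D : Matrix m n ℝ}
    (hrow : D *ᵥ (fun _ => 1) = 0) (hcol : (fun _ => 1) ᵥ* D = 0) (u : m → ℝ) (v : n → ℝ) :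
    ∑ i, ∑ j, D i j * (u i + v j) = 0 := by
  have hrow' : ∀ i, ∑ j, D i j = 0 := fun i => by
    simpa [mulVec, dotProduct] using congrFun hrow i
  have hcol' : ∀ j, ∑ i, D i j = 0 := fun j => by
    simpa [vecMul, dotProduct] using congrFun hcol j
  simp only [mul_add, Finset.sum_add_distrib]
  rw [Finset.sum_comm (f := fun i j => D i j * v j)]
  simp [← Finset.sum_mul, hrow', hcol']

theorem sum_sum_mul_add_add_eq_zero_of_transpose_eq [Fintype n] {D S : Matrix n n ℝ}
    (hD : Dᵀ = D) (hrow : D *ᵥ (fun _ => 1) = 0) (hS : Sᵀ = -S) (u v : n → ℝ) :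
    ∑ i, ∑ j, D i j * (S i j + (u i + v j)) = 0 := by
  have hcol : (fun _ => 1) ᵥ* D = 0 := by rw [← hD, vecMul_transpose, hrow]
  simp only [mul_add, Finset.sum_add_distrib]
  rw [sum_sum_mul_eq_zero_of_transpose_eq_of_transpose_eq_neg hD hS, zero_add]
  simpa only [mul_add, Finset.sum_add_distrib] using sum_sum_mul_add_eq_zero hrow hcol u v

end Matrix

theorem frobNorm_le_frobNorm_add {N : ℕ} {D Q : Matrix (Fin N) (Fin N) ℝ}
    (horth : ∑ i, ∑ j, D i j * Q i j = 0) : frobNorm Q ≤ frobNorm (D + Q) := by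
  have hexpand : ∑ i, ∑ j, ((D + Q) i j) ^ 2
      = ∑ i, ∑ j, (D i j) ^ 2 + 2 * ∑ i, ∑ j, D i j * Q i j + ∑ i, ∑ j, (Q i j) ^ 2 := by
    simp only [Matrix.add_apply, Finset.mul_sum, ← Finset.sum_add_distrib]
    exact Finset.sum_congr rfl fun i _ => Finset.sum_congr rfl fun j _ => by ring
  have hD : 0 ≤ ∑ i, ∑ j, (D i j) ^ 2 := by positivity
  unfold frobNorm
  apply Real.sqrt_le_sqrt
  rw [hexpand, horth]
  linarith

theorem projection_onto_C1 (N : ℕ) (hN : 0 < N)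
    (T K P J : Matrix (Fin N) (Fin N) ℝ)
    (hJ : J = Matrix.of fun _ _ => (1 : ℝ))
    (hK : K = (1 / 2 : ℝ) • (T + Tᵀ))
    (hP : P = K + (((N : ℝ) + ∑ i, ∑ j, K i j) / (N : ℝ) ^ 2) • J
            - ((1 : ℝ) / (N : ℝ)) • (K * J) - ((1 : ℝ) / (N : ℝ)) • (J * K)) :
    Pᵀ = P ∧ P *ᵥ (fun _ => (1 : ℝ)) = (fun _ => 1) ∧
    ∀ M : Matrix (Fin N) (Fin N) ℝ, Mᵀ = M → M *ᵥ (fun _ => (1 : ℝ)) = (fun _ => 1) →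
      frobNorm (P - T) ≤ frobNorm (M - T) := by
  have : NeZero N := ⟨hN.ne'⟩
  have hKsymm : Kᵀ = K := by
    rw [hK, transpose_smul, transpose_add, transpose_transpose, add_comm]
  set r := K *ᵥ (fun _ => (1 : ℝ))
  set c := ((N : ℝ) + ∑ i, ∑ j, K i j) / (N : ℝ) ^ 2
  have hPapply : ∀ i j, P i j = K i j + c - r i / N - r j / N := fun i j => by
    rw [hP, hJ]
    simp [mul_of_one_apply, of_one_mul_apply, ← mulVec_transpose, hKsymm, r, div_eq_inv_mul]
  have hPsymm : Pᵀ = P := by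
    ext i j
    rw [transpose_apply, hPapply, hPapply, ← transpose_apply K, hKsymm]
    ring
  have hProw : P *ᵥ (fun _ => (1 : ℝ)) = fun _ => 1 :=
    mulVec_one_eq_one_of_apply_eq (by simpa only [Fintype.card_fin] using hPapply)
  refine ⟨hPsymm, hProw, fun M hMsymm hMrow => ?_⟩
  have hPT : ∀ i j, (P - T) i j = (K - T) i j + ((c / 2 - r i / N) + (c / 2 - r j / N)) :=
    fun i j => by rw [Matrix.sub_apply, Matrix.sub_apply, hPapply]; ring
  have hskew : (K - T)ᵀ = -(K - T) := by
    ext i j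
    simp only [hK, transpose_apply, Matrix.sub_apply, Matrix.neg_apply, Matrix.smul_apply,
      Matrix.add_apply, smul_eq_mul]
    ring
  have horth : ∑ i, ∑ j, (M - P) i j * (P - T) i j = 0 := by
    simp only [hPT]
    exact sum_sum_mul_add_add_eq_zero_of_transpose_eq (by rw [transpose_sub, hMsymm, hPsymm])
      (by rw [sub_mulVec, hMrow, hProw, sub_self]) hskew _ _
  simpa using frobNorm_le_frobNorm_add horth
end

section
/- Suppose P ∈ ℝ^{C×N} has all entries nonnegative and satisfies P·Pᵀ = I_C. Then every column of P has at most one nonzero entry. -/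
open Matrix BigOperators

theorem Matrix.mul_apply_eq_zero_iff_of_nonneg {l m n R : Type*} [Fintype m] [Ring R]
    [PartialOrder R] [IsOrderedRing R] {A : Matrix l m R} {B : Matrix m n R}
    (hA : ∀ i j, 0 ≤ A i j) (hB : ∀ i j, 0 ≤ B i j) (i : l) (k : n) :
    (A * B) i k = 0 ↔ ∀ j, A i j * B j k = 0 := by
  rw [mul_apply, Finset.sum_eq_zero_iff_of_nonneg fun j _ => mul_nonneg (hA i j) (hB j k)]
  simp only [Finset.mem_univ, true_implies]

theorem nonneg_orthonormal_rows_column_support_general (N C : ℕ)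
    (P : Matrix (Fin C) (Fin N) ℝ) (hP0 : ∀ i j, 0 ≤ P i j)
    (hP : P * Pᵀ = 1) :
    ∀ j : Fin N, ∀ i i' : Fin C, P i j ≠ 0 → P i' j ≠ 0 → i = i' := by
  intro j i i' hi hi'
  by_contra hne
  have hzero : (P * Pᵀ) i i' = 0 := by rw [hP, one_apply_ne hne]
  have hprod : P i j * P i' j = 0 :=
    (mul_apply_eq_zero_iff_of_nonneg hP0 (fun k l => hP0 l k) i i').1 hzero j
  exact mul_ne_zero hi hi' hprod

theorem nonneg_orthonormal_rows_column_support (N C : ℕ) (hN : 0 < N) (hC : 0 < C)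
    (P : Matrix (Fin C) (Fin N) ℝ) (hP0 : ∀ i j, 0 ≤ P i j)
    (hP : P * Pᵀ = 1) :
    ∀ j : Fin N, ∀ i i' : Fin C, P i j ≠ 0 → P i' j ≠ 0 → i = i' :=
  nonneg_orthonormal_rows_column_support_general N C P hP0 hP
end

section
/- Let P ∈ ℝ^{C×N} be an entrywise nonnegative matrix with P·Pᵀ = I_C and suppose every column of P is nonzero. Then C ≤ N, and the map assigning to each column index j the unique row index i with P_{ij} > 0 is a well-defined surjection from {1,…,N} onto {1,…,C}; in particular PᵀP is a symmetric matrix whose support partitions {1,…,N} into C nonempty blocks (clusters). -/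
open Matrix BigOperators

/-!
Orthonormality of the rows of a nonnegative matrix means that distinct rows have disjoint supports,
since their inner product is a sum of nonnegative terms. So every nonzero column is supported on
exactly one row, which defines the cluster map `f`; each row has norm one, so it meets some column,
making `f` surjective; and `(Pᵀ P) j k` is a sum of nonnegative terms `P i j * P i k`, positive
exactly when columns `j` and `k` share their row.
-/

namespace Matrix

variable {m n R : Type*} [CommRing R] [LinearOrder R] [IsStrictOrderedRing R]
  {P : Matrix m n R}

theorem mul_eq_zero_of_nonneg_of_mul_transpose_eq_one [Fintype n] [DecidableEq m]
    (hP0 : ∀ i j, 0 ≤ P i j) (hP : P * Pᵀ = 1) {i i' : m} (hii' : i ≠ i') (j : n) :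
    P i j * P i' j = 0 := by
  have hsum : ∑ j, P i j * P i' j = 0 := by
    simpa [mul_apply, one_apply, hii'] using congrFun₂ hP i i'
  exact (Finset.sum_eq_zero_iff_of_nonneg fun j _ ↦ mul_nonneg (hP0 i j) (hP0 i' j)).1 hsum j
    (Finset.mem_univ j)

theorem eq_of_pos_of_pos_of_mul_transpose_eq_one [Fintype n] [DecidableEq m]
    (hP0 : ∀ i j, 0 ≤ P i j) (hP : P * Pᵀ = 1) {i i' : m} {j : n} (hi : 0 < P i j)
    (hi' : 0 < P i' j) : i = i' := by
  by_contra hii'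
  exact (mul_pos hi hi').ne' (mul_eq_zero_of_nonneg_of_mul_transpose_eq_one hP0 hP hii' j)

theorem exists_pos_of_mul_transpose_eq_one [Fintype n] [DecidableEq m]
    (hP0 : ∀ i j, 0 ≤ P i j) (hP : P * Pᵀ = 1) (i : m) : ∃ j, 0 < P i j := by
  have hrow : ∑ j, P i j * P i j = 1 := by simpa [mul_apply] using congrFun₂ hP i i
  by_contra! h
  have hzero : ∀ j, P i j = 0 := fun j ↦ (h j).antisymm (hP0 i j)
  simp [hzero] at hrow

theorem transpose_mul_self_apply_pos_iff [Fintype m] (hP0 : ∀ i j, 0 ≤ P i j) (j k : n) :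
    0 < (Pᵀ * P) j k ↔ ∃ i, 0 < P i j ∧ 0 < P i k := by
  simp only [mul_apply, transpose_apply]
  rw [Finset.sum_pos_iff_of_nonneg fun i _ ↦ mul_nonneg (hP0 i j) (hP0 i k)]
  simp only [Finset.mem_univ, true_and]
  refine exists_congr fun i ↦ ⟨fun h ↦ ?_, fun ⟨hj, hk⟩ ↦ mul_pos hj hk⟩
  exact ⟨pos_of_mul_pos_left h (hP0 i k), pos_of_mul_pos_right h (hP0 i j)⟩

end Matrix

theorem nonneg_orthonormal_rows_cluster_structure_general (N C : ℕ)
    (P : Matrix (Fin C) (Fin N) ℝ) (hP0 : ∀ i j, 0 ≤ P i j)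
    (hP : P * Pᵀ = 1) (hcol : ∀ j : Fin N, ∃ i : Fin C, P i j ≠ 0) :
    C ≤ N ∧
    ∃ f : Fin N → Fin C,
      (∀ j, 0 < P (f j) j) ∧
      (∀ j i, 0 < P i j → i = f j) ∧
      Function.Surjective f ∧
      (Pᵀ * P)ᵀ = Pᵀ * P ∧
      (∀ j k : Fin N, 0 < (Pᵀ * P) j k ↔ f j = f k) := by
  choose f hf using fun j ↦ (hcol j).imp fun i ↦ (hP0 i j).lt_of_ne'
  have hunique : ∀ j i, 0 < P i j → i = f j := fun j i hi ↦
    eq_of_pos_of_pos_of_mul_transpose_eq_one hP0 hP hi (hf j)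
  have hsurj : Function.Surjective f := fun i ↦
    (exists_pos_of_mul_transpose_eq_one hP0 hP i).imp fun j hj ↦ (hunique j i hj).symm
  refine ⟨by simpa using Fintype.card_le_of_surjective f hsurj, f, hf, hunique, hsurj,
    by rw [transpose_mul, transpose_transpose], fun j k ↦ ?_⟩
  rw [transpose_mul_self_apply_pos_iff hP0]
  constructor
  · rintro ⟨i, hj, hk⟩
    rw [← hunique j i hj, ← hunique k i hk]
  · intro hjk
    exact ⟨f j, hf j, hjk ▸ hf k⟩

theorem nonneg_orthonormal_rows_cluster_structure (N C : ℕ) (hN : 0 < N) (hC : 0 < C)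
    (P : Matrix (Fin C) (Fin N) ℝ) (hP0 : ∀ i j, 0 ≤ P i j)
    (hP : P * Pᵀ = 1) (hcol : ∀ j : Fin N, ∃ i : Fin C, P i j ≠ 0) :
    C ≤ N ∧
    ∃ f : Fin N → Fin C,
      (∀ j, 0 < P (f j) j) ∧
      (∀ j i, 0 < P i j → i = f j) ∧
      Function.Surjective f ∧
      (Pᵀ * P)ᵀ = Pᵀ * P ∧
      (∀ j k : Fin N, 0 < (Pᵀ * P) j k ↔ f j = f k) :=
  nonneg_orthonormal_rows_cluster_structure_general N C P hP0 hP hcol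
end
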